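/- arXiv:2310.11172 — 3 statements merged into one kernel-verified Lean document; each statement's English description precedes it below -/
import Mathlib

section
/- Let (A, B, C) be a recollement of abelian categories in which A, B, C have enough projectives and enough injectives, let X' be a class of objects of A closed under isomorphisms and X a class of objects of B closed under isomorphisms. Then X^⊥-cores i_*(A) ≤ X'^⊥-cores A + X^⊥-cores i_*(X'^⊥), where i_*(A) denotes the class of objects of B isomorphic to i_*(A) for A in A, i_*(X'^⊥) the class of objects of B isomorphic to i_*(A') for A' in X'^⊥, and X'^⊥-cores A the supremum over all objects of A. -/
open CategoryTheory CategoryTheory.Limits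

universe w₁ w₂ w₃ v₁ v₂ v₃ u₁ u₂ u₃

namespace Paper

/-- A recollement of abelian categories `(𝒜, ℬ, 𝒞)`. -/
structure Recollement (𝒜 : Type u₁) (ℬ : Type u₂) (𝒞 : Type u₃)
    [Category.{v₁} 𝒜] [Category.{v₂} ℬ] [Category.{v₃} 𝒞]
    [Preadditive 𝒜] [Preadditive ℬ] [Preadditive 𝒞] where
  /-- `i^* : ℬ → 𝒜` -/
  iStar : ℬ ⥤ 𝒜
  /-- `i_* : 𝒜 → ℬ` -/
  iIns : 𝒜 ⥤ ℬ
  /-- `i^! : ℬ → 𝒜` -/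
  iShriek : ℬ ⥤ 𝒜
  /-- `j_! : 𝒞 → ℬ` -/
  jShriek : 𝒞 ⥤ ℬ
  /-- `j^* : ℬ → 𝒞` -/
  jStar : ℬ ⥤ 𝒞
  /-- `j_* : 𝒞 → ℬ` -/
  jIns : 𝒞 ⥤ ℬ
  iStar_additive : iStar.Additive
  iIns_additive : iIns.Additive
  iShriek_additive : iShriek.Additive
  jShriek_additive : jShriek.Additive
  jStar_additive : jStar.Additive
  jIns_additive : jIns.Additive
  /-- `i^* ⊣ i_*` -/
  adj₁ : iStar ⊣ iIns
  /-- `i_* ⊣ i^!` -/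
  adj₂ : iIns ⊣ iShriek
  /-- `j_! ⊣ j^*` -/
  adj₃ : jShriek ⊣ jStar
  /-- `j^* ⊣ j_*` -/
  adj₄ : jStar ⊣ jIns
  iIns_full : iIns.Full
  iIns_faithful : iIns.Faithful
  jShriek_full : jShriek.Full
  jShriek_faithful : jShriek.Faithful
  jIns_full : jIns.Full
  jIns_faithful : jIns.Faithful
  /-- an object `B` of `ℬ` satisfies `j^*(B) = 0` iff `B ≅ i_*(A)` for some `A` -/
  ker_jStar : ∀ B : ℬ, IsZero (jStar.obj B) ↔ ∃ A : 𝒜, Nonempty (iIns.obj A ≅ B)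

variable {D : Type u₁} [Category.{v₁} D] [Abelian D]

/-- The right perpendicular class `X^⊥` of a class of objects:
objects `M` with `Ext^i(A, M) = 0` for all `A` in the class and all `i ≥ 1`. -/
def perp [HasExt.{w₁} D] (X : D → Prop) : D → Prop :=
  fun M => ∀ A, X A → ∀ i : ℕ, 1 ≤ i → Subsingleton (Abelian.Ext A M i)

/-- `CoresSeq W n M Z` : there is an exact sequence
`0 → M → W₀ → ⋯ → W_{n-1} → Z → 0` with each `Wᵢ` in `W`. -/
def CoresSeq (W : D → Prop) : ℕ → D → D → Prop
  | 0, M, Z => Nonempty (M ≅ Z)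
  | n + 1, M, Z => ∃ (W₀ K : D) (f : M ⟶ W₀) (g : W₀ ⟶ K) (h : f ≫ g = 0),
      W W₀ ∧ (ShortComplex.mk f g h).ShortExact ∧ CoresSeq W n K Z

/-- The `W`-coresolution dimension of an object, valued in `ℕ∞`:
the least `n` such that there is an exact sequence `0 → M → W₀ → ⋯ → Wₙ → 0`
with all `Wᵢ` in `W` (and `∞` if there is no such sequence). -/
noncomputable def coresDim (W : D → Prop) (M : D) : ℕ∞ :=
  sInf {n : ℕ∞ | ∃ m : ℕ, n = (m : ℕ∞) ∧ ∃ Z, W Z ∧ CoresSeq W m M Z}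

/-- The `W`-coresolution dimension of a class of objects: the supremum of the
coresolution dimensions of its members. -/
noncomputable def coresDimClass (W S : D → Prop) : ℕ∞ :=
  ⨆ (M : D) (_ : S M), coresDim W M

/-- The essential image of a class of objects under a functor. -/
def imageClass {E : Type u₂} [Category.{v₂} E] (F : D ⥤ E) (S : D → Prop) : E → Prop :=
  fun Y => ∃ M, S M ∧ Nonempty (F.obj M ≅ Y)

variable {𝒜 : Type u₁} {ℬ : Type u₂} {𝒞 : Type u₃}
  [Category.{v₁} 𝒜] [Category.{v₂} ℬ] [Category.{v₃} 𝒞]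
  [Abelian 𝒜] [Abelian ℬ] [Abelian 𝒞]
  [EnoughProjectives 𝒜] [EnoughInjectives 𝒜]
  [EnoughProjectives ℬ] [EnoughInjectives ℬ]
  [EnoughProjectives 𝒞] [EnoughInjectives 𝒞]
variable [HasExt.{w₁} 𝒜] [HasExt.{w₂} ℬ] [HasExt.{w₃} 𝒞]

/-!
Write `perpAbove X n` for the objects `M` with `Ext^i(X, M) = 0` for all `i > n`. Dimension
shifting along an injective coresolution shows that, with enough injectives, `X^⊥-cores M ≤ n`
exactly when `M` lies in `perpAbove X n`. Being both a left and a right adjoint, `i_*` is exact, so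
it carries an `X'^⊥`-coresolution of `A` of length `m ≤ X'^⊥-cores 𝒜` to a coresolution of `i_*A`
by objects of `i_*(X'^⊥)`, all of which lie in `perpAbove X n` for `n = X^⊥-cores i_*(X'^⊥)`;
dimension shifting along it puts `i_*A` in `perpAbove X (m + n)`.
-/

lemma CoresSeq.map {E : Type u₂} [Category.{v₂} E] [Abelian E] {F : D ⥤ E}
    [F.PreservesZeroMorphisms] (hF : ∀ {S : ShortComplex D}, S.ShortExact → (S.map F).ShortExact)
    {W : D → Prop} : ∀ {m : ℕ} {M Z : D},
      CoresSeq W m M Z → CoresSeq (imageClass F W) m (F.obj M) (F.obj Z)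
  | 0, _, _, ⟨e⟩ => ⟨F.mapIso e⟩
  | _ + 1, _, _, ⟨W₀, K, f, g, hfg, hW₀, hS, hK⟩ =>
    ⟨F.obj W₀, F.obj K, F.map f, F.map g, by rw [← F.map_comp, hfg, F.map_zero],
      ⟨W₀, hW₀, ⟨Iso.refl _⟩⟩, hF hS, hK.map hF⟩

lemma coresDim_le_of_coresSeq {W : D → Prop} {m : ℕ} {M Z : D} (hZ : W Z)
    (h : CoresSeq W m M Z) : coresDim W M ≤ m :=
  sInf_le ⟨m, rfl, Z, hZ, h⟩

lemma exists_coresSeq_of_coresDim_le {W : D → Prop} {M : D} {n : ℕ}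
    (h : coresDim W M ≤ n) : ∃ m ≤ n, ∃ Z, W Z ∧ CoresSeq W m M Z := by
  obtain ⟨_, ⟨m, rfl, hZ⟩, hm⟩ :=
    sInf_lt_iff.1 (h.trans_lt (ENat.natCast_lt_natCast.2 n.lt_succ_self))
  exact ⟨m, Nat.lt_succ_iff.1 (ENat.natCast_lt_natCast.1 hm), hZ⟩

section Ext

variable [HasExt.{w₁} D]

open Abelian Abelian.Ext

lemma subsingleton_ext_of_iso {A M N : D} (e : M ≅ N) {n : ℕ} [Subsingleton (Ext A M n)] :
    Subsingleton (Ext A N n) :=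
  Function.Surjective.subsingleton (f := fun x : Ext A M n ↦ x.comp (mk₀ e.hom) (add_zero n))
    fun y ↦ ⟨y.comp (mk₀ e.inv) (add_zero n), by
      simp only [comp_assoc_of_third_deg_zero, mk₀_comp_mk₀, Iso.inv_hom_id, comp_mk₀_id]⟩

lemma subsingleton_ext_X₁_of_shortExact {S : ShortComplex D} (hS : S.ShortExact) (A : D) {n : ℕ}
    [Subsingleton (Ext A S.X₃ n)] [Subsingleton (Ext A S.X₂ (n + 1))] :
    Subsingleton (Ext A S.X₁ (n + 1)) := by
  refine subsingleton_of_forall_eq 0 fun x ↦ ?_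
  obtain ⟨x₃, rfl⟩ := covariant_sequence_exact₁ A hS x (Subsingleton.elim _ _) rfl
  rw [Subsingleton.elim x₃ 0, Ext.zero_comp]

lemma subsingleton_ext_X₃_of_shortExact {S : ShortComplex D} (hS : S.ShortExact) (A : D) {n : ℕ}
    [Subsingleton (Ext A S.X₂ n)] [Subsingleton (Ext A S.X₁ (n + 1))] :
    Subsingleton (Ext A S.X₃ n) := by
  refine subsingleton_of_forall_eq 0 fun x ↦ ?_
  obtain ⟨x₂, rfl⟩ := covariant_sequence_exact₃ A hS x rfl (Subsingleton.elim _ _)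
  rw [Subsingleton.elim x₂ 0, Ext.zero_comp]

def perpAbove (X : D → Prop) (n : ℕ) : D → Prop :=
  fun M ↦ ∀ A, X A → ∀ i : ℕ, n < i → Subsingleton (Ext A M i)

variable {X : D → Prop}

lemma perpAbove.mono {n n' : ℕ} {M : D} (hM : perpAbove X n M) (h : n ≤ n') :
    perpAbove X n' M :=
  fun A hA i hi ↦ hM A hA i (by omega)

lemma perpAbove.of_iso {n : ℕ} {M N : D} (hM : perpAbove X n M) (e : M ≅ N) :
    perpAbove X n N :=
  fun A hA i hi ↦ have := hM A hA i hi; subsingleton_ext_of_iso e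

lemma perp_of_injective (I : D) [Injective I] : perp X I
  | _, _, i + 1, _ => subsingleton_of_injective _ _ i

lemma perpAbove_of_coresSeq {W : D → Prop} {n : ℕ} (hW : ∀ N, W N → perpAbove X n N) :
    ∀ {m : ℕ} {M Z : D}, CoresSeq W m M Z → perpAbove X n Z → perpAbove X (n + m) M
  | 0, _, _, ⟨e⟩, hZ => hZ.of_iso e.symm
  | m + 1, _, _, ⟨W₀, K, f, g, hfg, hW₀, hS, hK⟩, hZ => by
    intro A hA i hi
    obtain ⟨i, rfl⟩ : ∃ i₀, i = i₀ + 1 := ⟨i - 1, by omega⟩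
    have := perpAbove_of_coresSeq hW hK hZ A hA i (by omega)
    have := hW W₀ hW₀ A hA (i + 1) (by omega)
    exact subsingleton_ext_X₁_of_shortExact hS A

lemma exists_coresSeq_of_perpAbove [EnoughInjectives D] :
    ∀ {n : ℕ} {M : D}, perpAbove X n M → ∃ Z, perp X Z ∧ CoresSeq (perp X) n M Z
  | 0, M, hM => ⟨M, hM, ⟨Iso.refl M⟩⟩
  | n + 1, M, hM => by
    let S := ShortComplex.mk _ _ (cokernel.condition (Injective.ι M))
    have hS : S.ShortExact := { exact := S.exact_of_g_is_cokernel (cokernelIsCokernel S.f) }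
    have hK : perpAbove X n S.X₃ := fun A hA i hi ↦
      have := perp_of_injective S.X₂ A hA i (by omega)
      have := hM A hA (i + 1) (by omega)
      subsingleton_ext_X₃_of_shortExact hS A
    obtain ⟨Z, hZ, hKZ⟩ := exists_coresSeq_of_perpAbove hK
    exact ⟨Z, hZ, S.X₂, S.X₃, S.f, S.g, S.zero, perp_of_injective _, hS, hKZ⟩

lemma coresDim_perp_le_iff [EnoughInjectives D] {M : D} {n : ℕ} :
    coresDim (perp X) M ≤ n ↔ perpAbove X n M := by
  refine ⟨fun h ↦ ?_, fun h ↦ ?_⟩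
  · obtain ⟨m, hm, Z, hZ, hMZ⟩ := exists_coresSeq_of_coresDim_le h
    exact (perpAbove_of_coresSeq (fun _ ↦ id) hMZ hZ).mono (by omega)
  · obtain ⟨Z, hZ, hMZ⟩ := exists_coresSeq_of_perpAbove h
    exact coresDim_le_of_coresSeq hZ hMZ

end Ext

lemma perpAbove_map_of_coresDim_le {E : Type u₂} [Category.{v₂} E] [Abelian E] [HasExt.{w₂} E]
    {F : D ⥤ E} [F.PreservesZeroMorphisms]
    (hF : ∀ {S : ShortComplex D}, S.ShortExact → (S.map F).ShortExact)
    {W : D → Prop} {Y : E → Prop} {m n : ℕ} (hW : ∀ N, imageClass F W N → perpAbove Y n N)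
    {A : D} (hA : coresDim W A ≤ m) : perpAbove Y (m + n) (F.obj A) := by
  obtain ⟨k, hk, Z, hZ, hAZ⟩ := exists_coresSeq_of_coresDim_le hA
  exact (perpAbove_of_coresSeq hW (hAZ.map hF) (hW _ ⟨Z, hZ, ⟨Iso.refl _⟩⟩)).mono (by omega)

theorem stmt_5_general (R : Recollement 𝒜 ℬ 𝒞)
    (X' : 𝒜 → Prop)
    (X : ℬ → Prop) :
    coresDimClass (perp X) (imageClass R.iIns (fun _ => True)) ≤
      coresDimClass (perp X') (fun _ : 𝒜 => True) +
        coresDimClass (perp X) (imageClass R.iIns (perp X')) := by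
  have := R.iIns_additive
  have hi : ∀ {S : ShortComplex 𝒜}, S.ShortExact → (S.map R.iIns).ShortExact := fun hS ↦
    have := R.adj₁.isRightAdjoint
    have := R.adj₂.isLeftAdjoint
    hS.map_of_exact R.iIns
  refine iSup₂_le fun M ⟨A, _, ⟨e⟩⟩ ↦ ?_
  generalize ha : coresDimClass (perp X') (fun _ : 𝒜 => True) = a
  generalize hb : coresDimClass (perp X) (imageClass R.iIns (perp X')) = b
  cases a using ENat.recTopCoe with | top => simp | coe na => ?_
  cases b using ENat.recTopCoe with | top => simp | coe nb => ?_
  have hA : coresDim (perp X') A ≤ na :=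
    ha ▸ le_iSup₂ (f := fun A _ ↦ coresDim (perp X') A) A trivial
  have hW : ∀ N, imageClass R.iIns (perp X') N → perpAbove X nb N := fun N hN ↦
    coresDim_perp_le_iff.1 (hb ▸ le_iSup₂ (f := fun N _ ↦ coresDim (perp X) N) N hN)
  exact_mod_cast coresDim_perp_le_iff.2 ((perpAbove_map_of_coresDim_le hi hW hA).of_iso e)

/-- Theorem 3.6(2) : a bound for the `X^⊥`-coresolution dimension of `i_*(𝒜)`. -/
theorem stmt_5 (R : Recollement 𝒜 ℬ 𝒞)
    (X' : 𝒜 → Prop) (hX' : ∀ A B : 𝒜, (A ≅ B) → X' A → X' B)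
    (X : ℬ → Prop) (hX : ∀ A B : ℬ, (A ≅ B) → X A → X B) :
    coresDimClass (perp X) (imageClass R.iIns (fun _ => True)) ≤
      coresDimClass (perp X') (fun _ : 𝒜 => True) +
        coresDimClass (perp X) (imageClass R.iIns (perp X')) :=
  stmt_5_general R X' X

end Paper
end

section
/- Let (A, B, C) be a recollement of abelian categories in which A, B, C have enough projectives and enough injectives, let X' be a class of objects of A closed under isomorphisms and X a class of objects of B closed under isomorphisms. If the functor i^! is exact and i^!(X^⊥) ⊆ X'^⊥ (i.e. i^!(B') lies in X'^⊥ for every B' in X^⊥), then X'^⊥-cores A ≤ X^⊥-cores B, where both sides denote the suprema over all objects of A and of B respectively. -/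
open CategoryTheory CategoryTheory.Limits

universe w₁ w₂ w₃ v₁ v₂ v₃ u₁ u₂ u₃

namespace Paper

variable {D : Type u₁} [Category.{v₁} D] [Abelian D]

variable {𝒜 : Type u₁} {ℬ : Type u₂} {𝒞 : Type u₃}
  [Category.{v₁} 𝒜] [Category.{v₂} ℬ] [Category.{v₃} 𝒞]
  [Abelian 𝒜] [Abelian ℬ] [Abelian 𝒞]
  [EnoughProjectives 𝒜] [EnoughInjectives 𝒜]
  [EnoughProjectives ℬ] [EnoughInjectives ℬ]
  [EnoughProjectives 𝒞] [EnoughInjectives 𝒞]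
variable [HasExt.{w₁} 𝒜] [HasExt.{w₂} ℬ] [HasExt.{w₃} 𝒞]

section Aux

variable {D : Type u₁} {E : Type u₂} [Category.{v₁} D] [Category.{v₂} E]
  [Abelian D] [Abelian E]

lemma coresSeq_of_iso {W : D → Prop} :
    ∀ (n : ℕ) {M M' Z : D}, (M' ≅ M) → CoresSeq W n M Z → CoresSeq W n M' Z
  | 0, M, M', Z, e, ⟨i⟩ => ⟨e.trans i⟩
  | n + 1, M, M', Z, e, ⟨W₀, K, f, g, h, hW0, hse, hrest⟩ => by
    refine ⟨W₀, K, e.hom ≫ f, g, by simp [h], hW0, ?_, hrest⟩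
    refine ShortComplex.shortExact_of_iso ?_ hse
    exact ShortComplex.isoMk e.symm (Iso.refl _) (Iso.refl _) (by simp) (by simp)

lemma coresSeq_map (F : D ⥤ E) [F.Additive]
    [PreservesFiniteLimits F] [PreservesFiniteColimits F]
    {W : D → Prop} {W' : E → Prop} (hW : ∀ A, W A → W' (F.obj A)) :
    ∀ (n : ℕ) {M Z : D}, CoresSeq W n M Z → CoresSeq W' n (F.obj M) (F.obj Z)
  | 0, M, Z, ⟨i⟩ => ⟨F.mapIso i⟩
  | n + 1, M, Z, ⟨W₀, K, f, g, h, hW0, hse, hrest⟩ => by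
    haveI := hse.mono_f
    haveI := hse.epi_g
    haveI : Mono (F.map f) := inferInstance
    haveI : Epi (F.map g) := inferInstance
    refine ⟨F.obj W₀, F.obj K, F.map f, F.map g,
      by rw [← F.map_comp, h, F.map_zero], hW _ hW0, ?_,
      coresSeq_map F hW n hrest⟩
    exact hse.map F

end Aux

/-- Theorem 3.6(7) : if `i^!` is exact and `i^!(X^⊥) ⊆ X'^⊥`, then
`X'^⊥-cores 𝒜 ≤ X^⊥-cores ℬ`. -/
theorem stmt_7 (R : Recollement 𝒜 ℬ 𝒞)
    (X' : 𝒜 → Prop) (hX' : ∀ A B : 𝒜, (A ≅ B) → X' A → X' B)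
    (X : ℬ → Prop) (hX : ∀ A B : ℬ, (A ≅ B) → X A → X B)
    [PreservesFiniteLimits R.iShriek] [PreservesFiniteColimits R.iShriek]
    (hsub : ∀ B : ℬ, perp X B → perp X' (R.iShriek.obj B)) :
    coresDimClass (perp X') (fun _ : 𝒜 => True) ≤
      coresDimClass (perp X) (fun _ : ℬ => True) := by
  haveI := R.iShriek_additive
  haveI := R.iIns_additive
  haveI := R.iIns_full
  haveI := R.iIns_faithful
  refine iSup₂_le fun A _ => ?_
  have key : coresDim (perp X') A ≤ coresDim (perp X) (R.iIns.obj A) := by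
    refine sInf_le_sInf ?_
    rintro n ⟨m, rfl, Z, hZ, hcs⟩
    refine ⟨m, rfl, R.iShriek.obj Z, hsub Z hZ, ?_⟩
    have e : A ≅ R.iShriek.obj (R.iIns.obj A) :=
      asIso (R.adj₂.unit.app A)
    exact coresSeq_of_iso m e (coresSeq_map R.iShriek (fun B hB => hsub B hB) m hcs)
  exact key.trans (le_iSup₂ (f := fun (M : ℬ) (_ : True) => coresDim (perp X) M)
    (R.iIns.obj A) trivial)

end Paper
end

section
/- Let (A, B, C) be a recollement of abelian categories in which A, B, C have enough projectives and enough injectives, and let (X, Y) be a cotorsion pair in B. Assume that i_*(i^*(X)) lies in X for every X in X, i_*(i^*(Y)) lies in Y for every Y in Y, j_*(j^*(Y)) lies in Y for every Y in Y, and that the functors i^* and i^! are exact. Then: (1) the pair (i^*(X), i^!(Y)) is a cotorsion pair in A, and moreover the classes i^!(Y) and i^*(Y) coincide; (2) the pair (j^*(X), j^*(Y)) is a cotorsion pair in C; (3) if (X, Y) is hereditary, then so are (i^*(X), i^!(Y)) and (j^*(X), j^*(Y)). Here, for a functor F and a class S of objects, F(S) denotes the class of objects isomorphic to F(S) for some S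 in S. -/
open CategoryTheory CategoryTheory.Limits

universe w₁ w₂ w₃ v₁ v₂ v₃ u₁ u₂ u₃

namespace Paper

variable {D : Type u₁} [Category.{v₁} D] [Abelian D]

variable {𝒜 : Type u₁} {ℬ : Type u₂} {𝒞 : Type u₃}
  [Category.{v₁} 𝒜] [Category.{v₂} ℬ] [Category.{v₃} 𝒞]
  [Abelian 𝒜] [Abelian ℬ] [Abelian 𝒞]
  [EnoughProjectives 𝒜] [EnoughInjectives 𝒜]
  [EnoughProjectives ℬ] [EnoughInjectives ℬ]
  [EnoughProjectives 𝒞] [EnoughInjectives 𝒞]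
variable [HasExt.{w₁} 𝒜] [HasExt.{w₂} ℬ] [HasExt.{w₃} 𝒞]

section

variable {D : Type u₁} [Category.{v₁} D] [Abelian D] [HasExt.{w₁} D]

/-- A cotorsion pair `(X, Y)` in an abelian category: both classes are closed under
isomorphisms, `Ext¹(X, Y) = 0`, and every object admits the two approximation
short exact sequences. -/
structure IsCotorsionPair (X Y : D → Prop) : Prop where
  closedIso_left : ∀ A B : D, (A ≅ B) → X A → X B
  closedIso_right : ∀ A B : D, (A ≅ B) → Y A → Y B
  ext_zero : ∀ A B : D, X A → Y B → Subsingleton (Abelian.Ext A B 1)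
  exists_left : ∀ M : D, ∃ (Y₁ X₁ : D) (f : Y₁ ⟶ X₁) (g : X₁ ⟶ M) (w : f ≫ g = 0),
      Y Y₁ ∧ X X₁ ∧ (ShortComplex.mk f g w).ShortExact
  exists_right : ∀ M : D, ∃ (Y₁ X₁ : D) (f : M ⟶ Y₁) (g : Y₁ ⟶ X₁) (w : f ≫ g = 0),
      Y Y₁ ∧ X X₁ ∧ (ShortComplex.mk f g w).ShortExact

/-- A pair of classes is hereditary if `Ext^i(X, Y) = 0` for all `i ≥ 2`. -/
def Hereditary (X Y : D → Prop) : Prop :=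
  ∀ A B : D, X A → Y B → ∀ i : ℕ, 2 ≤ i → Subsingleton (Abelian.Ext A B i)

end

/-!
Everything is transported along the adjunctions `i_* ⊣ i^!` and `j^* ⊣ j_*`. An adjunction
between exact functors induces an adjunction between derived categories, hence isomorphisms
`Ext^n(i_* A, B) ≅ Ext^n(A, i^! B)` and `Ext^n(j^* B, C) ≅ Ext^n(B, j_* C)`; with the
hypotheses on `i_* i^*` and `j_* j^*` this moves the vanishing of `Ext` from `ℬ` to `𝒜` and `𝒞`.
Approximation sequences are obtained by applying the exact, essentially surjective functors `i^*`
and `j^*` to approximation sequences in `ℬ`.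

When `i^!` is exact, `j^*` and `i^!` jointly reflect isomorphisms, so `j_*` is exact and the
counit `i_* i^! B ⟶ B` is a monomorphism with cokernel `j_* j^* B`. Applying `i^*`, which kills
`j_*`, gives `i^! B ≅ i^* B` when `i^*` is exact as well; in particular `i^!(Y) = i^*(Y)`.
-/

section ExtAdjunction

variable {C D : Type*} [Category C] [Category D] [Abelian C] [Abelian D]
  {F : C ⥤ D} {G : D ⥤ C} [F.Additive] [G.Additive]

noncomputable def _root_.CategoryTheory.Adjunction.mapHomologicalComplex (adj : F ⊣ G)
    {ι : Type*} (c : ComplexShape ι) :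
    F.mapHomologicalComplex c ⊣ G.mapHomologicalComplex c :=
  { unit :=
      { app := fun K =>
          { f := fun i => adj.unit.app (K.X i)
            comm' := fun _ _ _ => (adj.unit.naturality _).symm }
        naturality := fun _ _ _ => by ext; exact adj.unit.naturality _ }
    counit :=
      { app := fun K =>
          { f := fun i => adj.counit.app (K.X i)
            comm' := fun _ _ _ => (adj.counit.naturality _).symm }
        naturality := fun _ _ _ => by ext; exact adj.counit.naturality _ }
    left_triangle_components := fun K => by ext i; exact adj.left_triangle_components (K.X i)
    right_triangle_components := fun K => by ext i; exact adj.right_triangle_components (K.X i) }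

variable [PreservesFiniteLimits F] [PreservesFiniteColimits F]
  [PreservesFiniteLimits G] [PreservesFiniteColimits G]

noncomputable def _root_.CategoryTheory.Adjunction.mapDerivedCategory (adj : F ⊣ G)
    [HasDerivedCategory C] [HasDerivedCategory D] :
    F.mapDerivedCategory ⊣ G.mapDerivedCategory :=
  have : CatCommSq (F.mapHomologicalComplex (ComplexShape.up ℤ)) DerivedCategory.Q
      DerivedCategory.Q F.mapDerivedCategory := ⟨F.mapDerivedCategoryFactors.symm⟩
  have : CatCommSq (G.mapHomologicalComplex (ComplexShape.up ℤ)) DerivedCategory.Q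
      DerivedCategory.Q G.mapDerivedCategory := ⟨G.mapDerivedCategoryFactors.symm⟩
  (adj.mapHomologicalComplex _).localization DerivedCategory.Q
    (HomologicalComplex.quasiIso _ _) DerivedCategory.Q (HomologicalComplex.quasiIso _ _)
    F.mapDerivedCategory G.mapDerivedCategory

open Abelian DerivedCategory in
noncomputable def _root_.CategoryTheory.Adjunction.extEquiv (adj : F ⊣ G)
    [HasExt.{w₁} C] [HasExt.{w₂} D] (A : C) (B : D) (n : ℕ) :
    Ext (F.obj A) B n ≃ Ext A (G.obj B) n :=
  letI := HasDerivedCategory.standard C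
  letI := HasDerivedCategory.standard D
  Ext.homEquiv.trans <|
    (((F.mapDerivedCategorySingleFunctor 0).app A).homCongr (Iso.refl _)).symm.trans <|
    ((adj.mapDerivedCategory.homEquiv _ _).trans
      ((Iso.refl _).homCongr ((G.mapDerivedCategory.commShiftIso (n : ℤ)).app _ ≪≫
        (shiftFunctor _ (n : ℤ)).mapIso ((G.mapDerivedCategorySingleFunctor 0).app B)))).trans
    Ext.homEquiv.symm

end ExtAdjunction

open Abelian in
noncomputable def extCongr {C : Type*} [Category C] [Abelian C] [HasExt.{w₁} C]
    {A A' B B' : C} (eA : A ≅ A') (eB : B ≅ B') (n : ℕ) : Ext A B n ≃ Ext A' B' n :=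
  (((extFunctor n).mapIso eA.symm.op).app B ≪≫ ((extFunctor n).obj (Opposite.op A')).mapIso eB
    ).addCommGroupIsoToAddEquiv.toEquiv

section ImageClass

variable {ℬ 𝒟 : Type*} [Category ℬ] [Category 𝒟]

lemma imageClass_of_iso {F : ℬ ⥤ 𝒟} {S : ℬ → Prop} {M N : 𝒟} (e : M ≅ N)
    (hM : imageClass F S M) : imageClass F S N :=
  let ⟨B, hB, ⟨e'⟩⟩ := hM
  ⟨B, hB, ⟨e' ≪≫ e⟩⟩

lemma imageClass_eq_of_iso {F G : ℬ ⥤ 𝒟} (e : ∀ B, F.obj B ≅ G.obj B) (S : ℬ → Prop) :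
    imageClass F S = imageClass G S := by
  ext M
  exact ⟨fun ⟨B, hB, ⟨e'⟩⟩ => ⟨B, hB, ⟨(e B).symm ≪≫ e'⟩⟩,
    fun ⟨B, hB, ⟨e'⟩⟩ => ⟨B, hB, ⟨e B ≪≫ e'⟩⟩⟩

lemma subsingleton_ext_of_imageClass [Abelian 𝒟] [HasExt.{w₁} 𝒟] {F G : ℬ ⥤ 𝒟}
    {X Y : ℬ → Prop} {n : ℕ}
    (h : ∀ A B, X A → Y B → Subsingleton (Abelian.Ext (F.obj A) (G.obj B) n))
    {M N : 𝒟} (hM : imageClass F X M) (hN : imageClass G Y N) :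
    Subsingleton (Abelian.Ext M N n) :=
  let ⟨A, hA, ⟨eA⟩⟩ := hM
  let ⟨B, hB, ⟨eB⟩⟩ := hN
  (extCongr eA eB n).subsingleton_congr.1 (h A B hA hB)

lemma IsCotorsionPair.imageClass [Abelian ℬ] [Abelian 𝒟] [HasExt.{w₁} ℬ] [HasExt.{w₂} 𝒟]
    {X Y : ℬ → Prop} (hXY : IsCotorsionPair X Y) (F : ℬ ⥤ 𝒟) [F.EssSurj]
    [PreservesFiniteLimits F] [PreservesFiniteColimits F]
    (hext : ∀ M N, imageClass F X M → imageClass F Y N → Subsingleton (Abelian.Ext M N 1)) :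
    IsCotorsionPair (imageClass F X) (imageClass F Y) where
  closedIso_left _ _ e h := imageClass_of_iso e h
  closedIso_right _ _ e h := imageClass_of_iso e h
  ext_zero := hext
  exists_left M := by
    obtain ⟨Y₁, X₁, f, g, w, hY₁, hX₁, hS⟩ := hXY.exists_left (F.objPreimage M)
    let e := F.objObjPreimageIso M
    refine ⟨F.obj Y₁, F.obj X₁, F.map f, F.map g ≫ e.hom, by simp [← F.map_comp_assoc, w],
      ⟨Y₁, hY₁, ⟨Iso.refl _⟩⟩, ⟨X₁, hX₁, ⟨Iso.refl _⟩⟩,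
      ShortComplex.shortExact_of_iso ?_ (hS.map_of_exact F)⟩
    exact ShortComplex.isoMk (Iso.refl _) (Iso.refl _) e (by simp [ShortComplex.map])
      (by simp [ShortComplex.map, e])
  exists_right M := by
    obtain ⟨Y₁, X₁, f, g, w, hY₁, hX₁, hS⟩ := hXY.exists_right (F.objPreimage M)
    let e := F.objObjPreimageIso M
    refine ⟨F.obj Y₁, F.obj X₁, e.inv ≫ F.map f, F.map g, by simp [← F.map_comp, w],
      ⟨Y₁, hY₁, ⟨Iso.refl _⟩⟩, ⟨X₁, hX₁, ⟨Iso.refl _⟩⟩,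
      ShortComplex.shortExact_of_iso ?_ (hS.map_of_exact F)⟩
    exact ShortComplex.isoMk e (Iso.refl _) (Iso.refl _) (by simp [ShortComplex.map, e])
      (by simp [ShortComplex.map])

end ImageClass

namespace Recollement

variable {𝒜 ℬ 𝒞 : Type*} [Category 𝒜] [Category ℬ] [Category 𝒞]
  [Abelian 𝒜] [Abelian ℬ] [Abelian 𝒞] (R : Recollement 𝒜 ℬ 𝒞)

attribute [instance] iStar_additive iIns_additive iShriek_additive jShriek_additive
  jStar_additive jIns_additive iIns_full iIns_faithful jShriek_full jShriek_faithful jIns_full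
  jIns_faithful

instance : R.iStar.IsLeftAdjoint := R.adj₁.isLeftAdjoint
instance : R.iIns.IsRightAdjoint := R.adj₁.isRightAdjoint
instance : R.iIns.IsLeftAdjoint := R.adj₂.isLeftAdjoint
instance : R.iShriek.IsRightAdjoint := R.adj₂.isRightAdjoint
instance : R.jShriek.IsLeftAdjoint := R.adj₃.isLeftAdjoint
instance : R.jStar.IsRightAdjoint := R.adj₃.isRightAdjoint
instance : R.jStar.IsLeftAdjoint := R.adj₄.isLeftAdjoint
instance : R.jIns.IsRightAdjoint := R.adj₄.isRightAdjoint

lemma isZero_jStar_obj_iIns_obj (A : 𝒜) : IsZero (R.jStar.obj (R.iIns.obj A)) :=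
  (R.ker_jStar _).2 ⟨A, ⟨Iso.refl _⟩⟩

lemma isZero_iStar_obj_jShriek_obj (c : 𝒞) : IsZero (R.iStar.obj (R.jShriek.obj c)) := by
  rw [IsZero.iff_id_eq_zero]
  apply ((R.adj₁.homEquiv _ _).trans (R.adj₃.homEquiv _ _)).injective
  exact (R.isZero_jStar_obj_iIns_obj _).eq_of_tgt _ _

lemma isZero_iShriek_obj_jIns_obj (c : 𝒞) : IsZero (R.iShriek.obj (R.jIns.obj c)) := by
  rw [IsZero.iff_id_eq_zero]
  apply ((R.adj₂.homEquiv _ _).symm.trans (R.adj₄.homEquiv _ _).symm).injective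
  exact (R.isZero_jStar_obj_iIns_obj _).eq_of_src _ _

lemma isZero_of_isZero_jStar_obj_of_isZero_iShriek_obj {B : ℬ} (hj : IsZero (R.jStar.obj B))
    (hi : IsZero (R.iShriek.obj B)) : IsZero B := by
  obtain ⟨A, ⟨e⟩⟩ := (R.ker_jStar B).1 hj
  have hA : IsZero A := hi.of_iso (asIso (R.adj₂.unit.app A) ≪≫ R.iShriek.mapIso e)
  exact (R.iIns.map_isZero hA).of_iso e.symm

lemma isIso_of_isIso_jStar_map_of_isIso_iShriek_map [PreservesFiniteColimits R.iShriek]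
    {B B' : ℬ} (f : B ⟶ B') (hj : IsIso (R.jStar.map f)) (hi : IsIso (R.iShriek.map f)) :
    IsIso f := by
  have : Mono f := Preadditive.mono_of_isZero_kernel _ <|
    R.isZero_of_isZero_jStar_obj_of_isZero_iShriek_obj
    ((isZero_kernel_of_mono _).of_iso (PreservesKernel.iso R.jStar f))
    ((isZero_kernel_of_mono _).of_iso (PreservesKernel.iso R.iShriek f))
  have : Epi f := Preadditive.epi_of_isZero_cokernel _ <|
    R.isZero_of_isZero_jStar_obj_of_isZero_iShriek_obj
    ((isZero_cokernel_of_epi _).of_iso (PreservesCokernel.iso R.jStar f))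
    ((isZero_cokernel_of_epi _).of_iso (PreservesCokernel.iso R.iShriek f))
  exact isIso_of_mono_of_epi f

lemma isIso_iShriek_map_counit (B : ℬ) : IsIso (R.iShriek.map (R.adj₂.counit.app B)) :=
  IsIso.of_isIso_fac_left (R.adj₂.right_triangle_components B)

lemma isIso_jStar_map_unit (B : ℬ) : IsIso (R.jStar.map (R.adj₄.unit.app B)) :=
  IsIso.of_isIso_fac_right (h := 𝟙 _) (R.adj₄.left_triangle_components B)

instance mono_counit_app (B : ℬ) : Mono (R.adj₂.counit.app B) := by
  have := R.isIso_iShriek_map_counit B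
  exact Preadditive.mono_of_isZero_kernel _ <|
    R.isZero_of_isZero_jStar_obj_of_isZero_iShriek_obj
    ((IsZero.of_mono (kernel.ι _) (R.isZero_jStar_obj_iIns_obj _)).of_iso
      (PreservesKernel.iso R.jStar _))
    ((isZero_kernel_of_mono _).of_iso (PreservesKernel.iso R.iShriek _))

lemma counit_comp_unit (B : ℬ) : R.adj₂.counit.app B ≫ R.adj₄.unit.app B = 0 :=
  (R.adj₄.homEquiv _ _).symm.injective ((R.isZero_jStar_obj_iIns_obj _).eq_of_src _ _)

lemma isIso_jStar_map_cokernel_π_counit (B : ℬ) :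
    IsIso (R.jStar.map (cokernel.π (R.adj₂.counit.app B))) := by
  have := cokernel.π_of_zero
    ((R.isZero_jStar_obj_iIns_obj _).eq_of_src (R.jStar.map (R.adj₂.counit.app B)) 0)
  exact IsIso.of_isIso_fac_right (PreservesCokernel.π_iso_hom R.jStar _)

noncomputable def cokernelCounitIso [PreservesFiniteColimits R.iShriek] (B : ℬ) :
    cokernel (R.adj₂.counit.app B) ≅ R.jIns.obj (R.jStar.obj B) :=
  have : IsIso (cokernel.desc _ _ (R.counit_comp_unit B)) := by
    apply R.isIso_of_isIso_jStar_map_of_isIso_iShriek_map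
    · have := R.isIso_jStar_map_cokernel_π_counit B
      have := R.isIso_jStar_map_unit B
      exact IsIso.of_isIso_fac_left (by rw [← R.jStar.map_comp, cokernel.π_desc])
    · have := R.isIso_iShriek_map_counit B
      exact isIso_of_source_target_iso_zero _
        ((isZero_cokernel_of_epi _).of_iso (PreservesCokernel.iso R.iShriek _)).isoZero
        (R.isZero_iShriek_obj_jIns_obj _).isoZero
  asIso (cokernel.desc _ _ (R.counit_comp_unit B))

/-- `j_* c ≅ j_* j^* j_! c` is the cokernel of the counit `i_* i^! j_! c ⟶ j_! c`, and `i^*`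
kills `j_! c`. -/
lemma isZero_iStar_obj_jIns_obj [PreservesFiniteColimits R.iShriek] (c : 𝒞) :
    IsZero (R.iStar.obj (R.jIns.obj c)) := by
  let B := R.jShriek.obj c
  have h : IsZero (R.iStar.obj (cokernel (R.adj₂.counit.app B))) :=
    (IsZero.of_epi (cokernel.π _) (R.isZero_iStar_obj_jShriek_obj c)).of_iso
      (PreservesCokernel.iso R.iStar _)
  exact h.of_iso (R.iStar.mapIso
    (R.jIns.mapIso (asIso (R.adj₃.unit.app c)) ≪≫ (R.cokernelCounitIso B).symm))

noncomputable def iShriekObjIsoIStarObj [PreservesFiniteLimits R.iStar]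
    [PreservesFiniteColimits R.iShriek] (B : ℬ) : R.iShriek.obj B ≅ R.iStar.obj B :=
  have : Epi (R.iStar.map (R.adj₂.counit.app B)) := Preadditive.epi_of_isZero_cokernel _
    ((R.isZero_iStar_obj_jIns_obj _).of_iso
      ((PreservesCokernel.iso R.iStar _).symm ≪≫ R.iStar.mapIso (R.cokernelCounitIso B)))
  have : IsIso (R.iStar.map (R.adj₂.counit.app B)) := isIso_of_mono_of_epi _
  (asIso (R.adj₁.counit.app _)).symm ≪≫ asIso (R.iStar.map (R.adj₂.counit.app B))

lemma preservesEpimorphisms_jIns [PreservesFiniteColimits R.iShriek] :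
    R.jIns.PreservesEpimorphisms where
  preserves f _ := by
    have := Functor.PreservesEpimorphisms.of_iso (asIso R.adj₄.counit).symm
    have : Epi (R.jStar.map (R.jIns.map f)) := Functor.map_epi (R.jIns ⋙ R.jStar) f
    exact Preadditive.epi_of_isZero_cokernel _
      (R.isZero_of_isZero_jStar_obj_of_isZero_iShriek_obj
        ((isZero_cokernel_of_epi _).of_iso (PreservesCokernel.iso R.jStar _))
        ((IsZero.of_epi (cokernel.π _) (R.isZero_iShriek_obj_jIns_obj _)).of_iso
          (PreservesCokernel.iso R.iShriek _)))

lemma preservesFiniteColimits_jIns [PreservesFiniteColimits R.iShriek] :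
    PreservesFiniteColimits R.jIns := by
  have := R.preservesEpimorphisms_jIns
  have : R.jIns.PreservesHomology := Functor.preservesHomology_of_preservesEpis_and_kernels _
  exact Functor.preservesFiniteColimits_of_preservesHomology _

instance : R.iStar.EssSurj := ⟨fun A => ⟨R.iIns.obj A, ⟨asIso (R.adj₁.counit.app A)⟩⟩⟩

instance : R.jStar.EssSurj := ⟨fun c => ⟨R.jIns.obj c, ⟨asIso (R.adj₄.counit.app c)⟩⟩⟩

end Recollement

theorem stmt_17_general (R : Recollement 𝒜 ℬ 𝒞)
    (X Y : ℬ → Prop) (hXY : IsCotorsionPair X Y)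
    (h₁ : ∀ M, X M → X (R.iIns.obj (R.iStar.obj M)))
    (h₃ : ∀ M, Y M → Y (R.jIns.obj (R.jStar.obj M)))
    [PreservesFiniteLimits R.iStar]
    [PreservesFiniteColimits R.iShriek] :
    (IsCotorsionPair (imageClass R.iStar X) (imageClass R.iShriek Y) ∧
      imageClass R.iShriek Y = imageClass R.iStar Y) ∧
    IsCotorsionPair (imageClass R.jStar X) (imageClass R.jStar Y) ∧
    (Hereditary X Y →
      Hereditary (imageClass R.iStar X) (imageClass R.iShriek Y) ∧
      Hereditary (imageClass R.jStar X) (imageClass R.jStar Y)) := by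
  have := R.preservesFiniteColimits_jIns
  have hY : imageClass R.iShriek Y = imageClass R.iStar Y :=
    imageClass_eq_of_iso R.iShriekObjIsoIStarObj Y
  have extA (n : ℕ) (h : ∀ A B, X A → Y B → Subsingleton (Abelian.Ext A B n)) {M N : 𝒜}
      (hM : imageClass R.iStar X M) (hN : imageClass R.iShriek Y N) :
      Subsingleton (Abelian.Ext M N n) :=
    subsingleton_ext_of_imageClass (fun A B hA hB =>
      (R.adj₂.extEquiv _ _ n).subsingleton_congr.1 (h _ _ (h₁ A hA) hB)) hM hN
  have extC (n : ℕ) (h : ∀ A B, X A → Y B → Subsingleton (Abelian.Ext A B n)) {M N : 𝒞}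
      (hM : imageClass R.jStar X M) (hN : imageClass R.jStar Y N) :
      Subsingleton (Abelian.Ext M N n) :=
    subsingleton_ext_of_imageClass (fun A B hA hB =>
      (R.adj₄.extEquiv _ _ n).subsingleton_congr.2 (h _ _ hA (h₃ B hB))) hM hN
  refine ⟨⟨?_, hY⟩, hXY.imageClass R.jStar fun _ _ => extC 1 hXY.ext_zero,
    fun hher => ⟨fun _ _ hM hN n hn => extA n (fun A B hA hB => hher A B hA hB n hn) hM hN,
      fun _ _ hM hN n hn => extC n (fun A B hA hB => hher A B hA hB n hn) hM hN⟩⟩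
  rw [hY]
  exact hXY.imageClass R.iStar fun _ _ hM hN => extA 1 hXY.ext_zero hM (hY ▸ hN)

/-- Theorem 4.6(1)(2)(3) : gluing a cotorsion pair of `ℬ` to cotorsion pairs
of `𝒜` and `𝒞`. -/
theorem stmt_17 (R : Recollement 𝒜 ℬ 𝒞)
    (X Y : ℬ → Prop) (hXY : IsCotorsionPair X Y)
    (h₁ : ∀ M, X M → X (R.iIns.obj (R.iStar.obj M)))
    (h₂ : ∀ M, Y M → Y (R.iIns.obj (R.iStar.obj M)))
    (h₃ : ∀ M, Y M → Y (R.jIns.obj (R.jStar.obj M)))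
    [PreservesFiniteLimits R.iStar] [PreservesFiniteColimits R.iStar]
    [PreservesFiniteLimits R.iShriek] [PreservesFiniteColimits R.iShriek] :
    (IsCotorsionPair (imageClass R.iStar X) (imageClass R.iShriek Y) ∧
      imageClass R.iShriek Y = imageClass R.iStar Y) ∧
    IsCotorsionPair (imageClass R.jStar X) (imageClass R.jStar Y) ∧
    (Hereditary X Y →
      Hereditary (imageClass R.iStar X) (imageClass R.iShriek Y) ∧
      Hereditary (imageClass R.jStar X) (imageClass R.jStar Y)) :=
  stmt_17_general R X Y hXY h₁ h₃

end Paper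
end
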